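/- Let N be a natural number and p, λ, β real numbers with 1 < p < N, λ > 0, β > 0. Let φ, g : ℝ → ℝ with φ continuously differentiable on [1,∞), φ(r) > 0 for all r ≥ 1, g continuous on [1,∞) with g(r) > 0 for all r ≥ 1, F satisfying the radial eigenvalue ODE on (1,∞), the Robin condition φ'(1) = β^(1/(p−1))·φ(1), and r_* > 1 with φ'(r_*) = 0. Set K := 1 + ((p−1)/(N−p))·β^(1/(p−1)). Then for every real M > 0 such that g(s) ≤ M for all s ∈ [1, r_*], one has r_*^N ≥ 1 + N·β/(λ·M·K^(p−1)). -/

import Mathlib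

/-! Since `F' = -λ r^(N-1) g φ^(p-1) ≤ 0`, `F` is nonincreasing, so `F ≤ F(1) = β φ(1)^(p-1)` on
`[1, r_*]`. This bounds `φ'` by `β^(1/(p-1)) φ(1) r^(-(N-1)/(p-1))`, and integrating from `1`
gives `φ ≤ K φ(1)`. Hence `-F' ≤ λ M K^(p-1) φ(1)^(p-1) r^(N-1)`, and integrating over `[1, r_*]`,
where `F(r_*) = 0`, gives `β ≤ λ M K^(p-1) (r_*^N - 1) / N`. -/

open Real Set

/-- The radial quantity `F(r) = r^(N-1) |φ'(r)|^(p-2) φ'(r)`, written with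
real exponents via the sign function. -/
noncomputable def radialF (N : ℕ) (p : ℝ) (φ : ℝ → ℝ) (r : ℝ) : ℝ :=
  r ^ ((N : ℝ) - 1) * Real.sign (deriv φ r) * |deriv φ r| ^ (p - 1)

lemma sign_mul_abs_rpow_eq {q : ℝ} (hq : 0 < q) (x : ℝ) :
    Real.sign x * |x| ^ q = max x 0 ^ q - max (-x) 0 ^ q := by
  rcases lt_trichotomy x 0 with hx | rfl | hx
  · simp [Real.sign_of_neg hx, abs_of_neg hx, hx.le, zero_rpow hq.ne']
  · simp [zero_rpow hq.ne']
  · simp [Real.sign_of_pos hx, abs_of_pos hx, hx.le, zero_rpow hq.ne']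

lemma continuous_sign_mul_abs_rpow {q : ℝ} (hq : 0 < q) :
    Continuous fun x : ℝ => Real.sign x * |x| ^ q := by
  simp only [sign_mul_abs_rpow_eq hq]
  fun_prop (disch := exact hq.le)

lemma le_add_of_deriv_le_rpow {f : ℝ → ℝ} {a b A α : ℝ} (ha : 0 < a) (hα : 1 < α) (hA : 0 ≤ A)
    (hfc : ContinuousOn f (Icc a b)) (hfd : ∀ r ∈ Ioo a b, DifferentiableAt ℝ f r)
    (hf' : ∀ r ∈ Ioo a b, deriv f r ≤ A * r ^ (-α)) :
    ∀ r ∈ Icc a b, f r ≤ f a + A / (α - 1) * a ^ (1 - α) := by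
  have hα1 : 0 < α - 1 := by linarith
  set ψ : ℝ → ℝ := fun r => f r + A / (α - 1) * r ^ (1 - α)
  have hψ : ∀ r ∈ Ioo a b, HasDerivAt ψ (deriv f r - A * r ^ (-α)) r := by
    intro r hr
    have hpow := (hasDerivAt_rpow_const (p := 1 - α) (Or.inl (ha.trans hr.1).ne')).const_mul
      (A / (α - 1))
    refine ((hfd r hr).hasDerivAt.add hpow).congr_deriv ?_
    rw [show 1 - α - 1 = -α by ring]
    field_simp
    ring
  have hψanti : AntitoneOn ψ (Icc a b) := by
    refine antitoneOn_of_hasDerivWithinAt_nonpos (convex_Icc a b)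
      (f' := fun r => deriv f r - A * r ^ (-α)) ?_ ?_ ?_
    · exact hfc.add (continuousOn_const.mul
        (continuousOn_id.rpow_const fun r hr => Or.inl (ha.trans_le hr.1).ne'))
    · rw [interior_Icc]
      exact fun r hr => (hψ r hr).hasDerivWithinAt
    · rw [interior_Icc]
      exact fun r hr => sub_nonpos.mpr (hf' r hr)
  intro r hr
  have hψr := hψanti (left_mem_Icc.mpr (hr.1.trans hr.2)) hr hr.1
  have : 0 ≤ A / (α - 1) * r ^ (1 - α) := by have := ha.trans_le hr.1; positivity
  simp only [ψ] at hψr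
  linarith

lemma sub_le_of_deriv_ge_neg_mul_rpow {F F' : ℝ → ℝ} {a b C n : ℝ} (ha : 0 < a) (hn : n ≠ 0)
    (hab : a ≤ b) (hFc : ContinuousOn F (Icc a b)) (hF : ∀ r ∈ Ioo a b, HasDerivAt F (F' r) r)
    (hF' : ∀ r ∈ Ioo a b, -(C * r ^ (n - 1)) ≤ F' r) :
    F a - F b ≤ C / n * (b ^ n - a ^ n) := by
  set H : ℝ → ℝ := fun r => F r + C / n * r ^ n
  have hH : ∀ r ∈ Ioo a b, HasDerivAt H (F' r + C * r ^ (n - 1)) r := by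
    intro r hr
    refine ((hF r hr).add ((hasDerivAt_rpow_const (p := n)
      (Or.inl (ha.trans hr.1).ne')).const_mul (C / n))).congr_deriv ?_
    field_simp
  have hHmono : MonotoneOn H (Icc a b) := by
    refine monotoneOn_of_hasDerivWithinAt_nonneg (convex_Icc a b)
      (f' := fun r => F' r + C * r ^ (n - 1)) ?_ ?_ ?_
    · exact hFc.add (continuousOn_const.mul
        (continuousOn_id.rpow_const fun r hr => Or.inl (ha.trans_le hr.1).ne'))
    · rw [interior_Icc]
      exact fun r hr => (hH r hr).hasDerivWithinAt
    · rw [interior_Icc]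
      exact fun r hr => neg_le_iff_add_nonneg.mp (hF' r hr)
  have hHab := hHmono (left_mem_Icc.mpr hab) (right_mem_Icc.mpr hab) hab
  simp only [H] at hHab
  linarith

section RadialODE

variable {N : ℕ} {p : ℝ} {φ : ℝ → ℝ}

lemma radialF_continuousOn {s : Set ℝ} (hp : 1 < p) (hs : ∀ r ∈ s, r ≠ 0)
    (hφ' : ContinuousOn (deriv φ) s) : ContinuousOn (radialF N p φ) s := by
  have hpow : ContinuousOn (fun r : ℝ => r ^ ((N : ℝ) - 1)) s :=
    continuousOn_id.rpow_const fun r hr => Or.inl (hs r hr)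
  refine (hpow.mul ((continuous_sign_mul_abs_rpow (q := p - 1) (by linarith)).comp_continuousOn
    hφ')).congr fun r _ => ?_
  simp only [radialF, mul_assoc, Pi.mul_apply, Function.comp_apply]

lemma radialF_eq_zero_of_deriv_eq_zero {r : ℝ} (h : deriv φ r = 0) : radialF N p φ r = 0 := by
  simp [radialF, h]

lemma radialF_of_deriv_pos {r : ℝ} (h : 0 < deriv φ r) :
    radialF N p φ r = r ^ ((N : ℝ) - 1) * deriv φ r ^ (p - 1) := by
  rw [radialF, Real.sign_of_pos h, abs_of_pos h, mul_one]

lemma deriv_le_of_radialF_le {r A : ℝ} (hp : 1 < p) (hr : 0 < r) (hA : 0 ≤ A)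
    (hF : radialF N p φ r ≤ A ^ (p - 1)) :
    deriv φ r ≤ A * r ^ (-(((N : ℝ) - 1) / (p - 1))) := by
  have hp1 : 0 < p - 1 := by linarith
  rcases le_or_gt (deriv φ r) 0 with hd | hd
  · exact hd.trans (by positivity)
  rw [radialF_of_deriv_pos hd] at hF
  refine (rpow_le_rpow_iff hd.le (by positivity) hp1).mp ?_
  rw [mul_rpow hA (by positivity), ← rpow_mul hr.le,
    show -(((N : ℝ) - 1) / (p - 1)) * (p - 1) = -((N : ℝ) - 1) by field_simp,
    rpow_neg hr.le, ← div_eq_mul_inv, le_div_iff₀ (by positivity)]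
  linarith

lemma radialF_antitoneOn {lam a R : ℝ} {g : ℝ → ℝ} (hlam : 0 ≤ lam) (ha : 0 ≤ a)
    (hFc : ContinuousOn (radialF N p φ) (Icc a R))
    (hODE : ∀ r ∈ Ioo a R,
      HasDerivAt (radialF N p φ) (-(lam * r ^ ((N : ℝ) - 1) * g r * φ r ^ (p - 1))) r)
    (hφ : ∀ r ∈ Ioo a R, 0 ≤ φ r) (hg : ∀ r ∈ Ioo a R, 0 ≤ g r) :
    AntitoneOn (radialF N p φ) (Icc a R) := by
  refine antitoneOn_of_hasDerivWithinAt_nonpos (convex_Icc a R) hFc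
    (f' := fun r => -(lam * r ^ ((N : ℝ) - 1) * g r * φ r ^ (p - 1))) ?_ ?_ <;> rw [interior_Icc]
  · exact fun r hr => (hODE r hr).hasDerivWithinAt
  · intro r hr
    have := hφ r hr
    have := hg r hr
    have : 0 ≤ r := by linarith [hr.1]
    simp only [neg_nonpos]
    positivity

lemma le_mul_apply_one_of_radialF_le {b R : ℝ} (hp : 1 < p) (hpN : p < N) (hb : 0 < b)
    (hφ1 : 0 < φ 1) (hRobin : deriv φ 1 = b * φ 1)
    (hφd : ∀ r ∈ Icc 1 R, DifferentiableAt ℝ φ r)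
    (hF : ∀ r ∈ Ioo 1 R, radialF N p φ r ≤ radialF N p φ 1) :
    ∀ r ∈ Icc 1 R, φ r ≤ (1 + (p - 1) / ((N : ℝ) - p) * b) * φ 1 := by
  have hp1 : 0 < p - 1 := by linarith
  have hF1 : radialF N p φ 1 = (b * φ 1) ^ (p - 1) := by
    rw [radialF_of_deriv_pos (hRobin ▸ by positivity), hRobin, one_rpow, one_mul]
  intro r hr
  have hbound := le_add_of_deriv_le_rpow one_pos (by rw [lt_div_iff₀ hp1]; linarith)
    (by positivity : 0 ≤ b * φ 1) (fun r hr => (hφd r hr).continuousAt.continuousWithinAt)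
    (fun r hr => hφd r (Ioo_subset_Icc_self hr))
    (fun r hr => deriv_le_of_radialF_le hp (by linarith [hr.1]) (by positivity) (hF1 ▸ hF r hr))
    r hr
  convert hbound using 1
  rw [one_rpow]
  field_simp
  ring

lemma radialF_sub_le {lam C R : ℝ} {g : ℝ → ℝ} (hN : 0 < N) (hR : 1 ≤ R)
    (hFc : ContinuousOn (radialF N p φ) (Icc 1 R))
    (hODE : ∀ r ∈ Ioo 1 R,
      HasDerivAt (radialF N p φ) (-(lam * r ^ ((N : ℝ) - 1) * g r * φ r ^ (p - 1))) r)
    (hsource : ∀ r ∈ Ioo 1 R, lam * g r * φ r ^ (p - 1) ≤ C) :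
    radialF N p φ 1 - radialF N p φ R ≤ C / N * (R ^ (N : ℝ) - 1) := by
  have h := sub_le_of_deriv_ge_neg_mul_rpow (C := C) (n := N) one_pos (by positivity) hR hFc
    hODE fun r hr => by
      have : 0 < r ^ ((N : ℝ) - 1) := by have := hr.1; positivity
      linarith [mul_le_mul_of_nonneg_right (hsource r hr) this.le]
  rwa [one_rpow] at h

end RadialODE

theorem critical_radius_lower_general (N : ℕ) (p lam β : ℝ)
    (hp : 1 < p) (hpN : p < N) (hlam : 0 < lam) (hβ : 0 < β)
    (φ g : ℝ → ℝ)
    (hφdiff : ∀ r ≥ (1 : ℝ), DifferentiableAt ℝ φ r)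
    (hφC1 : ContinuousOn (deriv φ) (Set.Ici 1))
    (hφpos : ∀ r ≥ (1 : ℝ), 0 < φ r)
    (hgpos : ∀ r ≥ (1 : ℝ), 0 < g r)
    (hODE : ∀ r > (1 : ℝ),
      HasDerivAt (radialF N p φ) (-(lam * r ^ ((N : ℝ) - 1) * g r * φ r ^ (p - 1))) r)
    (hRobin : deriv φ 1 = β ^ (1 / (p - 1)) * φ 1)
    (rstar : ℝ) (hrstar : 1 < rstar) (hcrit : deriv φ rstar = 0) :
    ∀ M > (0 : ℝ), (∀ s ∈ Set.Icc (1 : ℝ) rstar, g s ≤ M) →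
      1 + (N : ℝ) * β /
          (lam * M * (1 + ((p - 1) / ((N : ℝ) - p)) * β ^ (1 / (p - 1))) ^ (p - 1)) ≤
        rstar ^ (N : ℝ) := by
  intro M hM hgM
  have hN : (0 : ℝ) < N := by linarith
  have hφ1 : 0 < φ 1 := hφpos 1 le_rfl
  set b := β ^ (1 / (p - 1))
  set K := 1 + (p - 1) / ((N : ℝ) - p) * b
  have hb : 0 < b := by positivity
  have hK : 0 < K := by
    have : 0 < (p - 1) / ((N : ℝ) - p) := div_pos (by linarith) (by linarith)
    positivity
  have hFc : ContinuousOn (radialF N p φ) (Icc 1 rstar) :=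
    (radialF_continuousOn hp (fun r hr => by linarith [mem_Ici.mp hr]) hφC1).mono
      Icc_subset_Ici_self
  have hFanti := radialF_antitoneOn hlam.le zero_le_one hFc (fun r hr => hODE r hr.1)
    (fun r hr => (hφpos r hr.1.le).le) (fun r hr => (hgpos r hr.1.le).le)
  have hφle := le_mul_apply_one_of_radialF_le hp hpN hb hφ1 hRobin (fun r hr => hφdiff r hr.1)
    fun r hr => hFanti (left_mem_Icc.mpr hrstar.le) (Ioo_subset_Icc_self hr) hr.1.le
  have hdecay := radialF_sub_le (C := lam * M * (K * φ 1) ^ (p - 1)) (by exact_mod_cast hN)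
    hrstar.le hFc (fun r hr => hODE r hr.1) fun r hr => by
      have := hφpos r hr.1.le
      gcongr
      exacts [hgM r (Ioo_subset_Icc_self hr), hφle r (Ioo_subset_Icc_self hr)]
  have hbβ : b ^ (p - 1) = β := by
    rw [← rpow_mul hβ.le, one_div_mul_cancel (by linarith), rpow_one]
  rw [radialF_of_deriv_pos (hRobin ▸ by positivity), hRobin,
    radialF_eq_zero_of_deriv_eq_zero hcrit, one_rpow, one_mul, sub_zero, mul_rpow hb.le hφ1.le,
    mul_rpow hK.le hφ1.le, hbβ] at hdecay
  have hβle : β ≤ lam * M * K ^ (p - 1) / N * (rstar ^ (N : ℝ) - 1) := by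
    rw [← mul_le_mul_iff_left₀ (by positivity : 0 < φ 1 ^ (p - 1))]
    exact hdecay.trans_eq (by ring)
  rw [← le_sub_iff_add_le', div_le_iff₀ (by positivity)]
  calc (N : ℝ) * β ≤ N * (lam * M * K ^ (p - 1) / N * (rstar ^ (N : ℝ) - 1)) := by gcongr
    _ = _ := by field_simp

/-- Lower bound on the critical radius `r_*` in Theorem 1.4(b):
`r_*^N ≥ 1 + Nβ/(λ M K^(p-1))` whenever `g ≤ M` on `[1, r_*]`, where
`K = 1 + ((p-1)/(N-p)) β^(1/(p-1))`. -/
theorem critical_radius_lower (N : ℕ) (p lam β : ℝ)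
    (hp : 1 < p) (hpN : p < N) (hlam : 0 < lam) (hβ : 0 < β)
    (φ g : ℝ → ℝ)
    (hφdiff : ∀ r ≥ (1 : ℝ), DifferentiableAt ℝ φ r)
    (hφC1 : ContinuousOn (deriv φ) (Set.Ici 1))
    (hφpos : ∀ r ≥ (1 : ℝ), 0 < φ r)
    (hgcont : ContinuousOn g (Set.Ici 1))
    (hgpos : ∀ r ≥ (1 : ℝ), 0 < g r)
    (hODE : ∀ r > (1 : ℝ),
      HasDerivAt (radialF N p φ) (-(lam * r ^ ((N : ℝ) - 1) * g r * φ r ^ (p - 1))) r)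
    (hRobin : deriv φ 1 = β ^ (1 / (p - 1)) * φ 1)
    (rstar : ℝ) (hrstar : 1 < rstar) (hcrit : deriv φ rstar = 0) :
    ∀ M > (0 : ℝ), (∀ s ∈ Set.Icc (1 : ℝ) rstar, g s ≤ M) →
      1 + (N : ℝ) * β /
          (lam * M * (1 + ((p - 1) / ((N : ℝ) - p)) * β ^ (1 / (p - 1))) ^ (p - 1)) ≤
        rstar ^ (N : ℝ) :=
  critical_radius_lower_general N p lam β hp hpN hlam hβ φ g hφdiff hφC1 hφpos hgpos hODE hRobin
    rstar hrstar hcrit
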